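/- For every k ≥ 0 the inclusions PC_k ⊂ UC_k ⊂ PC_{k+1} hold and are strict, where PC_k is the class of clause-sets with propagation-hardness at most k and UC_k is the class of clause-sets with hardness at most k. -/

import Mathlib

open scoped Classical

noncomputable section

abbrev Var : Type := ℕ
abbrev Lit : Type := Var × Bool
abbrev Clause : Type := Finset Lit
abbrev ClauseSet : Type := Finset Clause

/-- A proper clause contains no complementary pair of literals. -/
def isClause (C : Clause) : Prop := ∀ v : Var, ¬((v, true) ∈ C ∧ (v, false) ∈ C)

/-- The set of variables occurring in a clause-set. -/
def clsVars (F : ClauseSet) : Finset Var := F.sup (fun C => C.image Prod.fst)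

def clauseSat (a : Var → Bool) (C : Clause) : Prop := ∃ l ∈ C, a l.1 = l.2

def cnfSat (a : Var → Bool) (F : ClauseSet) : Prop := ∀ C ∈ F, clauseSat a C

def sat (F : ClauseSet) : Prop := ∃ a : Var → Bool, cnfSat a F

/-- A literal `x` is forced for `F` iff every satisfying total assignment of `F`
makes `x` true (equivalently, assigning `x` to 0 yields an unsatisfiable clause-set). -/
def forcedLit (F : ClauseSet) (x : Lit) : Prop :=
  ∀ a : Var → Bool, cnfSat a F → a x.1 = x.2

/-- Application `φ * F` of a partial assignment: clauses containing a literal set to 1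
are removed, and literals set to 0 are removed from the remaining clauses. -/
def applyPA (φ : Var → Option Bool) (F : ClauseSet) : ClauseSet :=
  (F.filter (fun C => ¬ ∃ l ∈ C, φ l.1 = some l.2)).image
    (fun C => C.filter (fun l => φ l.1 ≠ some (!l.2)))

/-- Assigning the single literal `x` to true (`⟨x → 1⟩ * F`): clauses containing `x`
are removed, and the complementary literal is removed from the remaining clauses. -/
def asgLit (x : Lit) (F : ClauseSet) : ClauseSet :=
  (F.filter (fun C => x ∉ C)).image (fun C => C.erase (x.1, !x.2))

/-- The reduction `r_0`: detect the empty clause. -/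
def r0 (F : ClauseSet) : ClauseSet := if (∅ : Clause) ∈ F then {(∅ : Clause)} else F

/-- Fueled version of the reductions `r_k` (generalised unit-clause propagation):
`r_0` detects the empty clause; `r_{k+1}(F) = r_{k+1}(⟨x→1⟩ * F)` whenever there
is a literal `x` of `F` with `r_k(⟨x→0⟩ * F) = {⊥}`, and otherwise `r_{k+1}(F) = F`.
The fuel (first argument) makes the recursion structural: since every assignment
removes a variable, fuel `n(F) + 1` always suffices. -/
def rkAux : ℕ → ℕ → ClauseSet → ClauseSet
  | _, 0, F => r0 F
  | 0, _ + 1, F => r0 F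
  | fuel + 1, k + 1, F =>
      if h : ∃ x : Lit, x.1 ∈ clsVars F ∧
          rkAux fuel k (asgLit (x.1, !x.2) F) = {(∅ : Clause)} then
        rkAux fuel (k + 1) (asgLit h.choose F)
      else F

/-- The reduction `r_k` (generalised unit-clause propagation at level `k`);
`r_1` is unit-clause propagation, `r_2` is failed-literal elimination. -/
def rk (k : ℕ) (F : ClauseSet) : ClauseSet := rkAux ((clsVars F).card + 1) k F

/-- `φ` is a partial assignment with variables in `V`. -/
def PAover (V : Set Var) (φ : Var → Option Bool) : Prop :=
  {v | φ v ≠ none}.Finite ∧ ∀ v : Var, φ v ≠ none → v ∈ V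

/-- `hd^V(F) ≤ k`: for every partial assignment `φ` over `V` with `φ * F`
unsatisfiable, `r_k(φ * F) = {⊥}`. -/
def hdLe (k : ℕ) (V : Set Var) (F : ClauseSet) : Prop :=
  ∀ φ : Var → Option Bool, PAover V φ →
    ¬ sat (applyPA φ F) → rk k (applyPA φ F) = {(∅ : Clause)}

/-- The relative hardness `hd^V(F)`. -/
def hdV (V : Set Var) (F : ClauseSet) : ℕ := sInf {k | hdLe k V F}

/-- `phd^V(F) ≤ k`: for every partial assignment `φ` over `V`, if `φ * F` is
unsatisfiable then `r_k(φ * F) = {⊥}`, and if `φ * F` is satisfiable then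
`r_k(φ * F)` has no forced literal whose variable is in `V`. -/
def phdLe (k : ℕ) (V : Set Var) (F : ClauseSet) : Prop :=
  ∀ φ : Var → Option Bool, PAover V φ →
    (¬ sat (applyPA φ F) → rk k (applyPA φ F) = {(∅ : Clause)}) ∧
    (sat (applyPA φ F) →
      ∀ x : Lit, x.1 ∈ V → ¬ forcedLit (rk k (applyPA φ F)) x)

/-- The relative propagation-hardness `phd^V(F)`. -/
def phdV (V : Set Var) (F : ClauseSet) : ℕ := sInf {k | phdLe k V F}

/-- Absolute hardness: `hd(F) = hd^{var(F)}(F)`. -/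
def hd (F : ClauseSet) : ℕ := hdV (↑(clsVars F)) F

/-- Absolute propagation-hardness: `phd(F) = phd^{var(F)}(F)`. -/
def phd (F : ClauseSet) : ℕ := phdV (↑(clsVars F)) F

/-- The class `UC_k` of clause-sets of hardness at most `k`. -/
def UC (k : ℕ) : Set ClauseSet := {F | (∀ C ∈ F, isClause C) ∧ hd F ≤ k}

/-- The class `PC_k` of clause-sets of propagation-hardness at most `k`. -/
def PC (k : ℕ) : Set ClauseSet := {F | (∀ C ∈ F, isClause C) ∧ phd F ≤ k}


/-!
For `UC_k ⊆ PC_{k+1}`: `r_{k+1}` only propagates literals, so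
`r_{k+1}(φ * F) = ψ * F` for a larger partial assignment `ψ`, and no further propagation applies
to it. If a literal `x` were forced there, `⟨x → 0⟩ * (ψ * F)` would be an unsatisfiable instance
of `F`, hence refuted by `r_k` when `hd(F) ≤ k`, so `x` would have been propagated after all. The
infima defining `hd` and `phd` are attained because `r_n` splits on every variable, which gives
`phd(F) ≤ n(F)`.

Both inclusions are strict. `A_{k+1}` is unsatisfiable and all its clauses have length `k + 1`,
which survive `k` propagations, so `hd(A_{k+1}) > k`, while `phd(A_{k+1}) ≤ n(A_{k+1}) = k + 1`.
`A_k'` becomes unsatisfiable only after a variable is assigned, leaving `k` variables, so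
`hd(A_k') ≤ k`. But its literal `k` is forced, and `r_k` leaves `A_k'` unchanged: propagating
`k` would need `r_{k-1}` to refute `A_k`.
-/

section Basics

variable {F : ClauseSet} {C : Clause} {x l : Lit} {v : Var} {a : Var → Bool}

lemma mem_clsVars : v ∈ clsVars F ↔ ∃ C ∈ F, ∃ b, (v, b) ∈ C := by
  simp [clsVars]

lemma mem_clsVars_of_mem (hC : C ∈ F) (hl : l ∈ C) : l.1 ∈ clsVars F :=
  mem_clsVars.2 ⟨C, hC, l.2, hl⟩

lemma eq_empty_of_clsVars_eq_empty (hF : clsVars F = ∅) (hC : C ∈ F) : C = ∅ :=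
  Finset.eq_empty_of_forall_notMem fun l hl => by
    simpa [hF] using mem_clsVars_of_mem hC hl

lemma mem_asgLit {C' : Clause} :
    C' ∈ asgLit x F ↔ ∃ C ∈ F, x ∉ C ∧ C.erase (x.1, !x.2) = C' := by
  simp [asgLit, and_assoc]

lemma clsVars_asgLit_subset : clsVars (asgLit x F) ⊆ (clsVars F).erase x.1 := by
  intro v hv
  obtain ⟨_, hC', b, hb⟩ := mem_clsVars.1 hv
  obtain ⟨C, hC, hxC, rfl⟩ := mem_asgLit.1 hC'
  obtain ⟨hne, hb⟩ := Finset.mem_erase.1 hb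
  refine Finset.mem_erase.2 ⟨?_, mem_clsVars_of_mem hC hb⟩
  rintro rfl
  by_cases hbx : b = x.2
  · exact hxC (by rwa [hbx] at hb)
  · exact hne (by rw [Bool.eq_not_of_ne hbx])

lemma card_clsVars_asgLit_lt (hx : x.1 ∈ clsVars F) :
    (clsVars (asgLit x F)).card < (clsVars F).card :=
  (Finset.card_le_card clsVars_asgLit_subset).trans_lt (Finset.card_erase_lt_of_mem hx)

lemma asgLit_eq_self (hx : x.1 ∉ clsVars F) : asgLit x F = F := by
  have hnot : ∀ C ∈ F, ∀ b, (x.1, b) ∉ C := fun C hC b hb =>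
    hx (mem_clsVars_of_mem (l := (x.1, b)) hC hb)
  ext C
  simp only [mem_asgLit]
  constructor
  · rintro ⟨C, hC, -, rfl⟩
    rwa [Finset.erase_eq_of_notMem (hnot C hC _)]
  · exact fun hC => ⟨C, hC, hnot C hC x.2, Finset.erase_eq_of_notMem (hnot C hC _)⟩

lemma empty_mem_asgLit (h : ∅ ∈ F) : ∅ ∈ asgLit x F :=
  mem_asgLit.2 ⟨∅, h, Finset.notMem_empty x, Finset.erase_empty _⟩

lemma asgLit_comm {y : Lit} (h : x.1 ≠ y.1) : asgLit x (asgLit y F) = asgLit y (asgLit x F) := by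
  have key : ∀ u w : Lit, u.1 ≠ w.1 → ∀ C' : Clause, C' ∈ asgLit u (asgLit w F) ↔
      ∃ C ∈ F, w ∉ C ∧ u ∉ C ∧ (C.erase (w.1, !w.2)).erase (u.1, !u.2) = C' := by
    intro u w huw C'
    simp only [mem_asgLit]
    constructor
    · rintro ⟨_, ⟨C, hC, hwC, rfl⟩, huC, rfl⟩
      exact ⟨C, hC, hwC, fun hu => huC (Finset.mem_erase.2 ⟨fun he => huw (by rw [he]), hu⟩), rfl⟩
    · rintro ⟨C, hC, hwC, huC, rfl⟩
      exact ⟨_, ⟨C, hC, hwC, rfl⟩, fun hu => huC (Finset.mem_of_mem_erase hu), rfl⟩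
  ext C'
  rw [key x y h, key y x h.symm]
  simp only [Finset.erase_right_comm (s := _) (a := (x.1, !x.2)), and_left_comm (a := y ∉ _)]

lemma cnfSat_asgLit (ha : cnfSat a F) (hx : a x.1 = x.2) : cnfSat a (asgLit x F) := by
  rintro _ hC'
  obtain ⟨C, hC, -, rfl⟩ := mem_asgLit.1 hC'
  obtain ⟨l, hl, hal⟩ := ha C hC
  refine ⟨l, Finset.mem_erase.2 ⟨?_, hl⟩, hal⟩
  rintro rfl
  simp [hx] at hal

lemma cnfSat_of_cnfSat_asgLit (ha : cnfSat a (asgLit x F)) (hx : a x.1 = x.2) : cnfSat a F := by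
  intro C hC
  by_cases hxC : x ∈ C
  · exact ⟨x, hxC, hx⟩
  · obtain ⟨l, hl, hal⟩ := ha _ (mem_asgLit.2 ⟨C, hC, hxC, rfl⟩)
    exact ⟨l, Finset.mem_of_mem_erase hl, hal⟩

lemma cnfSat_update_of_not_mem {c : Bool} (hv : v ∉ clsVars F) (ha : cnfSat a F) :
    cnfSat (Function.update a v c) F := by
  intro C hC
  obtain ⟨l, hl, hal⟩ := ha C hC
  refine ⟨l, hl, ?_⟩
  rwa [Function.update_of_ne fun he => hv (by rw [← he]; exact mem_clsVars_of_mem hC hl)]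

lemma sat_asgLit_iff : sat (asgLit x F) ↔ ∃ a, cnfSat a F ∧ a x.1 = x.2 := by
  constructor
  · rintro ⟨a, ha⟩
    have hx : x.1 ∉ clsVars (asgLit x F) := fun h => by simpa using clsVars_asgLit_subset h
    exact ⟨_, cnfSat_of_cnfSat_asgLit (cnfSat_update_of_not_mem hx ha) (Function.update_self ..),
      Function.update_self ..⟩
  · rintro ⟨a, ha, hx⟩
    exact ⟨a, cnfSat_asgLit ha hx⟩

lemma forcedLit_iff_not_sat_asgLit : forcedLit F x ↔ ¬ sat (asgLit (x.1, !x.2) F) := by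
  simp only [sat_asgLit_iff, forcedLit, not_exists, not_and]
  exact forall_congr' fun a => imp_congr_right fun _ => by cases a x.1 <;> cases x.2 <;> simp

lemma not_forcedLit_of_not_mem (hx : x.1 ∉ clsVars F) (hF : sat F) : ¬ forcedLit F x := by
  rwa [forcedLit_iff_not_sat_asgLit, not_not, asgLit_eq_self (x := (x.1, !x.2)) hx]

lemma empty_not_mem_of_cnfSat (ha : cnfSat a F) : ∅ ∉ F := fun h => by
  simpa [clauseSat] using ha ∅ h

end Basics

/-- A choice-free description of `r_k(F) = {⊥}` (see `rk_eq_singleton_empty_iff`): any literal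
whose negation `r_k` refutes may be propagated, not just the one picked by `rk`. -/
inductive Refutable : ℕ → ClauseSet → Prop where
  | of_empty_mem (k : ℕ) (F : ClauseSet) : ∅ ∈ F → Refutable k F
  | propagate (k : ℕ) (F : ClauseSet) (x : Lit) : x.1 ∈ clsVars F →
      Refutable k (asgLit (x.1, !x.2) F) → Refutable (k + 1) (asgLit x F) → Refutable (k + 1) F

namespace Refutable

variable {F : ClauseSet} {k : ℕ}

lemma succ (h : Refutable k F) : Refutable (k + 1) F := by
  induction h with
  | of_empty_mem k F h => exact of_empty_mem _ _ h
  | propagate k F x hx _ _ ih₀ ih₁ => exact propagate _ F x hx ih₀ ih₁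

lemma asgLit (h : Refutable k F) (y : Lit) : Refutable k (_root_.asgLit y F) := by
  induction h generalizing y with
  | of_empty_mem k F h => exact of_empty_mem _ _ (empty_mem_asgLit h)
  | propagate k F x hx h₀ h₁ ih₀ ih₁ =>
    by_cases hy : y.1 ∈ clsVars F
    swap
    · rw [asgLit_eq_self hy]; exact propagate k F x hx h₀ h₁
    by_cases hxy : x.1 = y.1
    · by_cases hb : x.2 = y.2
      · rwa [show y = x from Prod.ext hxy.symm hb.symm]
      · rw [show y = (x.1, !x.2) from Prod.ext hxy.symm (Bool.eq_not_of_ne (Ne.symm hb))]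
        exact h₀.succ
    by_cases hx' : x.1 ∈ clsVars (_root_.asgLit y F)
    · refine propagate k _ x hx' ?_ ?_
      · rw [asgLit_comm (x := (x.1, !x.2)) hxy]; exact ih₀ y
      · rw [asgLit_comm hxy]; exact ih₁ y
    · simpa only [← asgLit_comm hxy, asgLit_eq_self hx'] using ih₁ y

lemma zero_iff : Refutable 0 F ↔ ∅ ∈ F :=
  ⟨fun h => by cases h; assumption, of_empty_mem 0 F⟩

lemma iff_of_clsVars_eq_empty (hF : clsVars F = ∅) : Refutable k F ↔ ∅ ∈ F := by
  refine ⟨fun h => ?_, of_empty_mem k F⟩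
  cases h with
  | of_empty_mem _ _ h => exact h
  | propagate _ _ x hx _ _ => simp [hF] at hx

lemma not_sat (h : Refutable k F) : ¬ sat F := by
  induction h with
  | of_empty_mem k F h => exact fun ⟨a, ha⟩ => empty_not_mem_of_cnfSat ha h
  | propagate k F x hx _ _ ih₀ ih₁ =>
    rintro ⟨a, ha⟩
    by_cases hax : a x.1 = x.2
    · exact ih₁ ⟨a, cnfSat_asgLit ha hax⟩
    · exact ih₀ ⟨a, cnfSat_asgLit ha (Bool.eq_not_of_ne hax)⟩

lemma of_not_sat (n : ℕ) (hF : (clsVars F).card ≤ n) (hsat : ¬ sat F) : Refutable n F := by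
  induction n generalizing F with
  | zero =>
    obtain ⟨C, hC⟩ : F.Nonempty :=
      Finset.nonempty_iff_ne_empty.2 fun h => hsat ⟨fun _ => true, by simp [cnfSat, h]⟩
    rw [Nat.le_zero, Finset.card_eq_zero] at hF
    exact of_empty_mem 0 F (eq_empty_of_clsVars_eq_empty hF hC ▸ hC)
  | succ n ih =>
    by_cases hn : (clsVars F).card ≤ n
    · exact (ih hn hsat).succ
    obtain ⟨v, hv⟩ := Finset.card_pos.1 (by omega : 0 < (clsVars F).card)
    have hsub : ∀ b : Bool, Refutable n (_root_.asgLit (v, b) F) := fun b =>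
      ih (by have := card_clsVars_asgLit_lt (x := (v, b)) hv; omega)
        fun hs => hsat (by obtain ⟨a, ha, -⟩ := sat_asgLit_iff.1 hs; exact ⟨a, ha⟩)
    exact propagate n F (v, true) hv (hsub false) (hsub true).succ

end Refutable

/-- Each propagation shortens a clause by at most one literal. -/
lemma not_refutable_of_lt_card {m : ℕ} {F : ClauseSet} (hF : ∀ C ∈ F, m < C.card) :
    ¬ Refutable m F := by
  intro h
  induction h with
  | of_empty_mem k F h => simpa using hF ∅ h
  | propagate k F x _ _ _ ih₀ _ =>
    refine ih₀ fun _ hC' => ?_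
    obtain ⟨C, hC, -, rfl⟩ := mem_asgLit.1 hC'
    exact Nat.lt_of_lt_of_le (by have := hF C hC; omega) Finset.pred_card_le_card_erase

section Reduction

variable {F G : ClauseSet} {k : ℕ} {x : Lit}

lemma eq_singleton_empty_of_refutable (hF : Refutable (k + 1) F)
    (hstable : ∀ x : Lit, x.1 ∈ clsVars F → ¬ Refutable k (asgLit (x.1, !x.2) F)) : F = {∅} := by
  cases hF with
  | of_empty_mem _ _ h =>
    have hvars : clsVars F = ∅ := Finset.eq_empty_of_forall_notMem fun v hv =>
      hstable (v, true) hv (.of_empty_mem _ _ (empty_mem_asgLit h))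
    exact Finset.eq_singleton_iff_unique_mem.2 ⟨h, fun _ => eq_empty_of_clsVars_eq_empty hvars⟩
  | propagate _ _ x hx h₀ _ => exact absurd h₀ (hstable x hx)

lemma r0_eq_singleton_empty_iff : r0 F = {∅} ↔ ∅ ∈ F := by
  unfold r0
  split_ifs with h
  · exact iff_of_true rfl h
  · exact iff_of_false (fun hF => h (hF ▸ Finset.mem_singleton_self _)) h

lemma rkAux_eq_singleton_empty_iff {f : ℕ} (hf : (clsVars F).card ≤ f) :
    rkAux f k F = {∅} ↔ Refutable k F := by
  induction f generalizing k F with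
  | zero =>
    have hF : clsVars F = ∅ := Finset.card_eq_zero.1 (Nat.le_zero.1 hf)
    cases k <;> rw [rkAux, r0_eq_singleton_empty_iff, Refutable.iff_of_clsVars_eq_empty hF]
  | succ f ih =>
    cases k with
    | zero => rw [rkAux, r0_eq_singleton_empty_iff, Refutable.zero_iff]
    | succ k =>
      have hcard : ∀ y : Lit, y.1 ∈ clsVars F → (clsVars (asgLit y F)).card ≤ f := fun y hy => by
        have := card_clsVars_asgLit_lt hy; omega
      rw [rkAux]
      split_ifs with h
      · obtain ⟨hz, hr⟩ := h.choose_spec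
        rw [ih (hcard _ hz)]
        exact ⟨.propagate k F _ hz ((ih (hcard (_, !_) hz)).1 hr), fun hF => hF.asgLit _⟩
      · refine ⟨fun hF => .of_empty_mem _ _ (hF ▸ Finset.mem_singleton_self _),
          fun hF => eq_singleton_empty_of_refutable hF fun y hy hr => h ?_⟩
        exact ⟨y, hy, (ih (hcard (_, !_) hy)).2 hr⟩

lemma rk_eq_singleton_empty_iff : rk k F = {∅} ↔ Refutable k F :=
  rkAux_eq_singleton_empty_iff (Nat.le_succ _)

/-- One step of `r_{k+1}`: a literal `x` is set to true because `r_k` refutes `⟨x → 0⟩ * F`. -/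
def PropagationStep (k : ℕ) (F G : ClauseSet) : Prop :=
  ∃ x : Lit, x.1 ∈ clsVars F ∧ Refutable k (asgLit (x.1, !x.2) F) ∧ asgLit x F = G

lemma rkAux_succ_spec {f : ℕ} (hf : (clsVars F).card < f) :
    Relation.ReflTransGen (PropagationStep k) F (rkAux f (k + 1) F) ∧
      ∀ G, ¬ PropagationStep k (rkAux f (k + 1) F) G := by
  induction f generalizing F with
  | zero => omega
  | succ f ih =>
    rw [rkAux]
    split_ifs with h
    · obtain ⟨hz, hr⟩ := h.choose_spec
      have hlt := card_clsVars_asgLit_lt hz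
      have hlt' := card_clsVars_asgLit_lt (x := (h.choose.1, !h.choose.2)) hz
      obtain ⟨hreach, hstable⟩ := ih (F := asgLit h.choose F) (by omega)
      exact ⟨.head ⟨_, hz, (rkAux_eq_singleton_empty_iff (by omega)).1 hr, rfl⟩ hreach, hstable⟩
    · refine ⟨.refl, fun G ⟨y, hy, hr, _⟩ => h ⟨y, hy, ?_⟩⟩
      have := card_clsVars_asgLit_lt (x := (y.1, !y.2)) hy
      exact (rkAux_eq_singleton_empty_iff (by omega)).2 hr

lemma reflTransGen_rk_succ : Relation.ReflTransGen (PropagationStep k) F (rk (k + 1) F) :=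
  (rkAux_succ_spec (Nat.lt_succ_self _)).1

lemma not_propagationStep_rk_succ : ¬ PropagationStep k (rk (k + 1) F) G :=
  (rkAux_succ_spec (Nat.lt_succ_self _)).2 G

lemma rk_succ_eq_self (hF : ∀ G, ¬ PropagationStep k F G) : rk (k + 1) F = F := by
  rcases Relation.ReflTransGen.cases_head_iff.1 (reflTransGen_rk_succ (k := k) (F := F)) with
    h | ⟨G, hG, -⟩
  · exact h.symm
  · exact absurd hG (hF G)

lemma PropagationStep.cnfSat {a : Var → Bool} (h : PropagationStep k F G) (ha : cnfSat a F) :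
    cnfSat a G := by
  obtain ⟨x, -, hr, rfl⟩ := h
  refine cnfSat_asgLit ha (by_contra fun hax => hr.not_sat ⟨a, cnfSat_asgLit ha ?_⟩)
  exact Bool.eq_not_of_ne hax

lemma cnfSat_of_reflTransGen {a : Var → Bool} (h : Relation.ReflTransGen (PropagationStep k) F G)
    (ha : cnfSat a F) : cnfSat a G := by
  induction h with
  | refl => exact ha
  | tail _ hstep ih => exact hstep.cnfSat ih

lemma sat_rk_succ (hF : sat F) : sat (rk (k + 1) F) :=
  let ⟨a, ha⟩ := hF
  ⟨a, cnfSat_of_reflTransGen reflTransGen_rk_succ ha⟩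

/-- No propagation step applies to `r_{k+1}(F)`, so a forced literal `x` there is one for which
`r_k` does not refute `⟨x → 0⟩ * r_{k+1}(F)`. -/
lemma not_forcedLit_rk_succ (hF : sat F)
    (href : x.1 ∈ clsVars (rk (k + 1) F) → ¬ sat (asgLit (x.1, !x.2) (rk (k + 1) F)) →
      Refutable k (asgLit (x.1, !x.2) (rk (k + 1) F))) :
    ¬ forcedLit (rk (k + 1) F) x := by
  intro hx
  by_cases hmem : x.1 ∈ clsVars (rk (k + 1) F)
  · exact not_propagationStep_rk_succ ⟨x, hmem, href hmem (forcedLit_iff_not_sat_asgLit.1 hx), rfl⟩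
  · exact not_forcedLit_of_not_mem hmem (sat_rk_succ hF) hx

end Reduction

section PartialAssignment

variable {F : ClauseSet} {φ : Var → Option Bool} {v : Var} {b : Bool} {V : Set Var}

lemma applyPA_none : applyPA (fun _ => none) F = F := by
  simp [applyPA]

lemma PAover_none : PAover V (fun _ => none) := by
  simp [PAover]

lemma mem_applyPA {C' : Clause} :
    C' ∈ applyPA φ F ↔ ∃ C ∈ F, (∀ l ∈ C, φ l.1 ≠ some l.2) ∧
      C.filter (fun l => φ l.1 ≠ some (!l.2)) = C' := by
  simp [applyPA, and_assoc]

lemma mem_clsVars_applyPA (hv : v ∈ clsVars (applyPA φ F)) : φ v = none ∧ v ∈ clsVars F := by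
  obtain ⟨_, hC', b, hb⟩ := mem_clsVars.1 hv
  obtain ⟨C, hC, hsat, rfl⟩ := mem_applyPA.1 hC'
  obtain ⟨hb, hφ⟩ := Finset.mem_filter.1 hb
  refine ⟨?_, mem_clsVars_of_mem hC hb⟩
  have := hsat _ hb
  cases h : φ v with
  | none => rfl
  | some c => cases b <;> cases c <;> simp_all

lemma clsVars_applyPA_subset : clsVars (applyPA φ F) ⊆ clsVars F :=
  fun _ hv => (mem_clsVars_applyPA hv).2

lemma applyPA_update (hv : φ v = none) :
    applyPA (Function.update φ v (some b)) F = asgLit (v, b) (applyPA φ F) := by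
  have hfilter : ∀ C : Clause,
      C.filter (fun l => Function.update φ v (some b) l.1 ≠ some (!l.2)) =
        (C.filter (fun l => φ l.1 ≠ some (!l.2))).erase (v, !b) := by
    intro C
    ext ⟨w, c⟩
    by_cases hw : w = v
    · subst hw; cases b <;> cases c <;> simp [hv]
    · simp [hw]
  ext C'
  simp only [mem_applyPA, mem_asgLit, hfilter]
  constructor
  · rintro ⟨C, hC, hsat, rfl⟩
    refine ⟨_, ⟨C, hC, fun l hl => ?_, rfl⟩, fun hvb => ?_, rfl⟩
    · by_cases hw : l.1 = v
      · rw [hw, hv]; simp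
      · simpa [Function.update_of_ne hw] using hsat l hl
    · simpa using hsat _ (Finset.mem_filter.1 hvb).1
  · rintro ⟨_, ⟨C, hC, hsat, rfl⟩, hvb, rfl⟩
    refine ⟨C, hC, fun l hl => ?_, rfl⟩
    by_cases hw : l.1 = v
    · have hl' : l = (v, l.2) := Prod.ext hw rfl
      rw [hl'] at hl ⊢
      simp only [Function.update_self, ne_eq, Option.some.injEq]
      rintro rfl
      exact hvb (Finset.mem_filter.2 ⟨hl, by simp [hv]⟩)
    · simpa [Function.update_of_ne hw] using hsat l hl

lemma PAover.update (hφ : PAover V φ) (hv : v ∈ V) :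
    PAover V (Function.update φ v (some b)) := by
  refine ⟨(hφ.1.insert v).subset fun w hw => ?_, fun w hw => ?_⟩ <;>
    by_cases hwv : w = v
  · exact Or.inl hwv
  · exact Or.inr (by simpa [Function.update_of_ne hwv] using hw)
  · exact hwv ▸ hv
  · exact hφ.2 w (by simpa [Function.update_of_ne hwv] using hw)

/-- Propagation only assigns variables. -/
lemma exists_rk_succ_applyPA_eq {k : ℕ} (hφ : PAover (clsVars F) φ) :
    ∃ ψ, PAover (clsVars F) ψ ∧ rk (k + 1) (applyPA φ F) = applyPA ψ F := by
  suffices ∀ G, Relation.ReflTransGen (PropagationStep k) (applyPA φ F) G →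
      ∃ ψ, PAover (clsVars F) ψ ∧ G = applyPA ψ F from this _ reflTransGen_rk_succ
  intro G hG
  induction hG with
  | refl => exact ⟨φ, hφ, rfl⟩
  | tail _ hstep ih =>
    obtain ⟨ψ, hψ, rfl⟩ := ih
    obtain ⟨x, hx, -, rfl⟩ := hstep
    obtain ⟨hnone, hxF⟩ := mem_clsVars_applyPA hx
    exact ⟨_, hψ.update hxF, (applyPA_update hnone).symm⟩

end PartialAssignment

section Hardness

variable {F : ClauseSet} {k : ℕ}

lemma hdLe_of_phdLe {V : Set Var} (h : phdLe k V F) : hdLe k V F :=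
  fun φ hφ => (h φ hφ).1

theorem phdLe_card (F : ClauseSet) : phdLe (clsVars F).card (clsVars F) F := by
  intro φ hφ
  have hcard := Finset.card_le_card (clsVars_applyPA_subset (φ := φ) (F := F))
  refine ⟨fun hunsat => rk_eq_singleton_empty_iff.2 (.of_not_sat _ hcard hunsat), ?_⟩
  intro hsat x hxV
  obtain ⟨n, hn⟩ := Nat.exists_eq_succ_of_ne_zero (Finset.card_ne_zero.2 ⟨x.1, hxV⟩)
  rw [hn]
  refine not_forcedLit_rk_succ hsat fun hx hunsat => .of_not_sat n ?_ hunsat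
  obtain ⟨ψ, -, hψ⟩ := exists_rk_succ_applyPA_eq (k := n) hφ
  have := card_clsVars_asgLit_lt (x := (x.1, !x.2)) hx
  have := Finset.card_le_card (hψ ▸ clsVars_applyPA_subset)
  omega

theorem phdLe_succ_of_hdLe (h : hdLe k (clsVars F) F) : phdLe (k + 1) (clsVars F) F := by
  intro φ hφ
  refine ⟨fun hunsat => rk_eq_singleton_empty_iff.2
    (rk_eq_singleton_empty_iff.1 (h φ hφ hunsat)).succ, fun hsat x _ => ?_⟩
  obtain ⟨ψ, hψ, hrk⟩ := exists_rk_succ_applyPA_eq (k := k) hφ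
  refine not_forcedLit_rk_succ hsat fun hx hunsat => ?_
  rw [hrk] at hx hunsat ⊢
  obtain ⟨hnone, hxF⟩ := mem_clsVars_applyPA hx
  rw [← applyPA_update hnone] at hunsat ⊢
  exact rk_eq_singleton_empty_iff.1 (h _ (hψ.update hxF) hunsat)

/-- A partial assignment making `F` unsatisfiable is nonempty, so it removes a variable. -/
theorem hdLe_of_sat (hF : sat F) (hn : (clsVars F).card ≤ k + 1) : hdLe k (clsVars F) F := by
  intro φ hφ hunsat
  obtain ⟨v, hv⟩ : ∃ v, φ v ≠ none := by
    by_contra! h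
    rw [show φ = fun _ => none from funext h, applyPA_none] at hunsat
    exact hunsat hF
  have hsub : clsVars (applyPA φ F) ⊆ (clsVars F).erase v := fun w hw =>
    have ⟨hnone, hwF⟩ := mem_clsVars_applyPA hw
    Finset.mem_erase.2 ⟨by rintro rfl; exact hv hnone, hwF⟩
  have := Finset.card_le_card hsub
  rw [Finset.card_erase_of_mem (hφ.2 v hv)] at this
  exact rk_eq_singleton_empty_iff.2 (.of_not_sat k (by omega) hunsat)

lemma phdLe_phd (F : ClauseSet) : phdLe (phd F) (clsVars F) F :=
  Nat.sInf_mem (s := {k | phdLe k _ F}) ⟨_, phdLe_card F⟩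

lemma hdLe_hd (F : ClauseSet) : hdLe (hd F) (clsVars F) F :=
  Nat.sInf_mem (s := {k | hdLe k _ F}) ⟨_, hdLe_of_phdLe (phdLe_card F)⟩

lemma hd_le (h : hdLe k (clsVars F) F) : hd F ≤ k := Nat.sInf_le h

lemma phd_le (h : phdLe k (clsVars F) F) : phd F ≤ k := Nat.sInf_le h

lemma hd_le_phd : hd F ≤ phd F := hd_le (hdLe_of_phdLe (phdLe_phd F))

lemma phd_le_hd_add_one : phd F ≤ hd F + 1 := phd_le (phdLe_succ_of_hdLe (hdLe_hd F))

lemma PC_subset_UC : PC k ⊆ UC k :=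
  fun _ ⟨hcl, h⟩ => ⟨hcl, hd_le_phd.trans h⟩

lemma UC_subset_PC_succ : UC k ⊆ PC (k + 1) :=
  fun _ ⟨hcl, h⟩ => ⟨hcl, phd_le_hd_add_one.trans (Nat.add_le_add_right h 1)⟩

end Hardness

section FullClauses

variable {S T : Finset Var} {m : ℕ}

def fullClause (S T : Finset Var) : Clause := S.image fun v => (v, decide (v ∈ T))

/-- `A_S`: all `2^|S|` full clauses over `S`. -/
def fullClauses (S : Finset Var) : ClauseSet := S.powerset.image (fullClause S)

lemma mem_fullClauses {C : Clause} : C ∈ fullClauses S ↔ ∃ T ⊆ S, fullClause S T = C := by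
  simp [fullClauses]

lemma card_fullClause : (fullClause S T).card = S.card :=
  Finset.card_image_of_injective _ fun _ _ h => congrArg Prod.fst h

lemma isClause_fullClause : isClause (fullClause S T) := by
  intro v
  simp +contextual [fullClause]

lemma clsVars_fullClauses : clsVars (fullClauses S) = S := by
  ext v
  simp only [mem_clsVars, mem_fullClauses]
  constructor
  · rintro ⟨_, ⟨T, -, rfl⟩, b, hb⟩
    simp only [fullClause, Finset.mem_image, Prod.mk.injEq] at hb
    obtain ⟨w, hw, rfl, -⟩ := hb
    exact hw
  · exact fun hv => ⟨_, ⟨∅, Finset.empty_subset S, rfl⟩, false, by simp [fullClause, hv]⟩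

lemma not_sat_fullClauses : ¬ sat (fullClauses S) := by
  rintro ⟨a, ha⟩
  obtain ⟨l, hl, hal⟩ :=
    ha _ (mem_fullClauses.2 ⟨S.filter (a · = false), Finset.filter_subset _ _, rfl⟩)
  simp only [fullClause, Finset.mem_image] at hl
  obtain ⟨v, hv, rfl⟩ := hl
  cases h : a v <;> simp_all

lemma not_refutable_fullClauses (hm : m < S.card) : ¬ Refutable m (fullClauses S) :=
  not_refutable_of_lt_card fun _ hC => by
    obtain ⟨T, -, rfl⟩ := mem_fullClauses.1 hC
    rwa [card_fullClause]

lemma fullClauses_mem_PC (k : ℕ) : fullClauses (Finset.range k) ∈ PC k := by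
  refine ⟨fun C hC => ?_, ?_⟩
  · obtain ⟨T, -, rfl⟩ := mem_fullClauses.1 hC
    exact isClause_fullClause
  · simpa [clsVars_fullClauses] using phd_le (phdLe_card (fullClauses (Finset.range k)))

lemma fullClauses_not_mem_UC (k : ℕ) : fullClauses (Finset.range (k + 1)) ∉ UC k := by
  rintro ⟨-, hhd⟩
  have h := hdLe_hd (fullClauses (Finset.range (k + 1))) _ PAover_none
  rw [applyPA_none, rk_eq_singleton_empty_iff] at h
  exact not_refutable_fullClauses (by simp; omega) (h not_sat_fullClauses)

end FullClauses

section Weakening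

variable {F G : ClauseSet} {x : Lit} {k : ℕ}

lemma isClause_insert {C : Clause} (hC : isClause C) (hx : (x.1, !x.2) ∉ C) :
    isClause (insert x C) := by
  rintro v ⟨h₁, h₂⟩
  rw [Finset.mem_insert] at h₁ h₂
  rcases h₁ with rfl | h₁
  · exact hx (h₂.resolve_left (by simp))
  rcases h₂ with rfl | h₂
  · exact hx h₁
  · exact hC v ⟨h₁, h₂⟩

lemma clsVars_image_insert_subset : clsVars (F.image (insert x)) ⊆ insert x.1 (clsVars F) := by
  intro v hv
  obtain ⟨_, hC', b, hb⟩ := mem_clsVars.1 hv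
  obtain ⟨C, hC, rfl⟩ := Finset.mem_image.1 hC'
  rcases Finset.mem_insert.1 hb with hb | hb
  · exact Finset.mem_insert.2 (Or.inl (congrArg Prod.fst hb))
  · exact Finset.mem_insert_of_mem (mem_clsVars_of_mem hC hb)

lemma mem_clsVars_image_insert (hF : F.Nonempty) : x.1 ∈ clsVars (F.image (insert x)) :=
  let ⟨C, hC⟩ := hF
  mem_clsVars_of_mem (Finset.mem_image_of_mem _ hC) (Finset.mem_insert_self x C)

lemma cnfSat_image_insert {a : Var → Bool} (ha : a x.1 = x.2) : cnfSat a (F.image (insert x)) := by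
  intro _ hC
  obtain ⟨C, -, rfl⟩ := Finset.mem_image.1 hC
  exact ⟨x, Finset.mem_insert_self x C, ha⟩

lemma forcedLit_image_insert (hF : ¬ sat F) : forcedLit (F.image (insert x)) x := by
  intro a ha
  by_contra hax
  refine hF ⟨a, fun C hC => ?_⟩
  obtain ⟨l, hl, hal⟩ := ha _ (Finset.mem_image_of_mem _ hC)
  rcases Finset.mem_insert.1 hl with rfl | hl
  · exact absurd hal hax
  · exact ⟨l, hl, hal⟩

lemma asgLit_neg_image_insert (hx : x.1 ∉ clsVars F) :
    asgLit (x.1, !x.2) (F.image (insert x)) = F := by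
  have hnot : ∀ C ∈ F, ∀ b, (x.1, b) ∉ C := fun C hC b hb =>
    hx (mem_clsVars_of_mem (l := (x.1, b)) hC hb)
  ext C
  simp only [mem_asgLit, Finset.mem_image, Bool.not_not]
  constructor
  · rintro ⟨_, ⟨D, hD, rfl⟩, -, rfl⟩
    rwa [Finset.erase_insert (hnot D hD x.2)]
  · intro hC
    refine ⟨_, ⟨C, hC, rfl⟩, fun h => ?_, Finset.erase_insert (hnot C hC x.2)⟩
    rcases Finset.mem_insert.1 h with h | h
    · simp [Prod.ext_iff] at h
    · exact hnot C hC _ h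

/-- The only propagation that could apply to `F` weakened by `x` is that of `x`, and it leaves
`F` to be refuted. -/
lemma not_propagationStep_image_insert (hx : x.1 ∉ clsVars F) (hF : ¬ Refutable k F) :
    ¬ PropagationStep k (F.image (insert x)) G := by
  rintro ⟨y, -, hr, -⟩
  by_cases hyx : y = x
  · subst hyx
    exact hF (asgLit_neg_image_insert hx ▸ hr)
  refine hr.not_sat (sat_asgLit_iff.2 ⟨fun v => if v = y.1 then !y.2 else x.2, ?_, by simp⟩)
  refine cnfSat_image_insert ?_
  split_ifs with h
  · exact (Bool.eq_not_of_ne fun he => hyx (Prod.ext h.symm he.symm)).symm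
  · rfl

lemma rk_image_insert (hx : x.1 ∉ clsVars F) (hF : ∀ j < k, ¬ Refutable j F) :
    rk k (F.image (insert x)) = F.image (insert x) := by
  cases k with
  | zero =>
    refine if_neg fun h => ?_
    obtain ⟨C, -, hC⟩ := Finset.mem_image.1 h
    exact Finset.insert_ne_empty x C hC
  | succ k =>
    exact rk_succ_eq_self fun _ => not_propagationStep_image_insert hx (hF k k.lt_succ_self)

end Weakening

section Witnesses

/-- `A_k'`: every clause of `A_{0, …, k-1}` weakened by the new positive literal `k`. -/
def weakenedFullClauses (k : ℕ) : ClauseSet :=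
  (fullClauses (Finset.range k)).image (insert (k, true))

variable (k : ℕ)

lemma self_not_mem_clsVars_fullClauses_range : k ∉ clsVars (fullClauses (Finset.range k)) := by
  simp [clsVars_fullClauses]

lemma weakenedFullClauses_mem_UC : weakenedFullClauses k ∈ UC k := by
  refine ⟨fun _ hC => ?_, hd_le (hdLe_of_sat ⟨fun _ => true, cnfSat_image_insert rfl⟩ ?_)⟩
  · obtain ⟨_, hD, rfl⟩ := Finset.mem_image.1 hC
    obtain ⟨T, -, rfl⟩ := mem_fullClauses.1 hD
    exact isClause_insert isClause_fullClause fun h =>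
      self_not_mem_clsVars_fullClauses_range k (mem_clsVars_of_mem (l := (k, !true)) hD h)
  · calc (clsVars (weakenedFullClauses k)).card
        ≤ (insert k (clsVars (fullClauses (Finset.range k)))).card :=
          Finset.card_le_card clsVars_image_insert_subset
      _ = k + 1 := by simp [clsVars_fullClauses]

lemma rk_weakenedFullClauses {m : ℕ} (hm : m ≤ k) :
    rk m (weakenedFullClauses k) = weakenedFullClauses k :=
  rk_image_insert (self_not_mem_clsVars_fullClauses_range k)
    fun _ hj => not_refutable_fullClauses (by simp; omega)

lemma weakenedFullClauses_not_mem_PC : weakenedFullClauses k ∉ PC k := by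
  rintro ⟨-, hphd⟩
  have hne : (fullClauses (Finset.range k)).Nonempty :=
    ⟨_, mem_fullClauses.2 ⟨∅, Finset.empty_subset _, rfl⟩⟩
  have h := (phdLe_phd (weakenedFullClauses k) _ PAover_none).2
  rw [applyPA_none, rk_weakenedFullClauses k hphd] at h
  exact h ⟨fun _ => true, cnfSat_image_insert rfl⟩ (k, true) (mem_clsVars_image_insert hne)
    (forcedLit_image_insert not_sat_fullClauses)

end Witnesses

/-- for every `k ≥ 0` the strict inclusions
`PC_k ⊂ UC_k ⊂ PC_{k+1}` hold. -/
theorem stmt13 (k : ℕ) : PC k ⊂ UC k ∧ UC k ⊂ PC (k + 1) :=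
  ⟨(Set.ssubset_iff_of_subset PC_subset_UC).2
      ⟨_, weakenedFullClauses_mem_UC k, weakenedFullClauses_not_mem_PC k⟩,
    (Set.ssubset_iff_of_subset UC_subset_PC_succ).2
      ⟨_, fullClauses_mem_PC (k + 1), fullClauses_not_mem_UC k⟩⟩
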